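/- Let G be a countable discrete group, X a compact Hausdorff space, and a ∈ C(X) ⋊_r G a normed element with τ a state on C(X) ⋊_r G such that τ|_{C(X)} = δ_x and τ|_{C*_r(G)} is G-invariant. Suppose f ∈ C(X), t ∈ G, and for every ε > 0 there exist s₁, ..., s_m ∈ G and f₁, ..., f_m ∈ C(X) with f_j ≥ 0, ∑_j f_j = 1, and ‖∑_j f_j λ_{s_j} λ_t λ_{s_j⁻¹}‖ < ε. Then τ(f λ_t) = 0. -/

import Mathlib

/-!
Because `τ` restricts to the character `δ_x` on `C(X)`, the Cauchy–Schwarz inequality for the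
GNS form of `τ` puts `C(X)` into the multiplicative domain of `τ`: `τ(g c) = g(x) τ(c)`.
Combined with conjugation invariance, `τ` takes the value `τ(λ_t)` on every average
`∑_j f_j λ_{s_j} λ_t λ_{s_j}⁻¹`, and since a state has norm one, `|τ(λ_t)|` is smaller than
every `ε > 0`.
-/

open scoped ComplexOrder

namespace PositiveLinearMap

section NonUnital

variable {A : Type*} [NonUnitalCStarAlgebra A] [PartialOrder A] [StarOrderedRing A]

lemma norm_apply_star_mul_sq_le (τ : A →ₚ[ℂ] ℂ) (a b : A) :
    ‖τ (star a * b)‖ ^ 2 ≤ ‖τ (star a * a)‖ * ‖τ (star b * b)‖ := by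
  have hnorm (c : A) : ‖τ.toPreGNS c‖ ^ 2 = ‖τ (star c * c)‖ := by
    simpa using congrArg norm (τ.preGNS_norm_sq (τ.toPreGNS c))
  rw [← hnorm, ← hnorm, ← mul_pow]
  exact pow_le_pow_left₀ (norm_nonneg _) (norm_inner_le_norm (τ.toPreGNS a) (τ.toPreGNS b)) 2

lemma apply_mul_eq_zero_of_apply_mul_star_eq_zero (τ : A →ₚ[ℂ] ℂ) {a : A}
    (ha : τ (a * star a) = 0) (b : A) : τ (a * b) = 0 := by
  have := τ.norm_apply_star_mul_sq_le (star a) b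
  rw [star_star, ha, norm_zero, zero_mul] at this
  simpa using this

end NonUnital

section Unital

variable {A : Type*} [CStarAlgebra A] [PartialOrder A] [StarOrderedRing A]

noncomputable def ofNonnegStarMulSelf (τ : A →ₗ[ℂ] ℂ) (hτ : ∀ a, 0 ≤ τ (star a * a)) : A →ₚ[ℂ] ℂ :=
  .mk₀ τ fun a ha => by
    obtain ⟨b, rfl⟩ := CStarAlgebra.nonneg_iff_eq_star_mul_self.mp ha
    exact hτ b

lemma norm_apply_le (τ : A →ₚ[ℂ] ℂ) (a : A) : ‖τ a‖ ≤ ‖τ 1‖ * ‖a‖ := by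
  have hcs := τ.norm_apply_star_mul_sq_le 1 a
  have hbound := τ.norm_apply_le_of_nonneg (star a * a) (star_mul_self_nonneg a)
  rw [star_one, one_mul, one_mul] at hcs
  rw [CStarRing.norm_star_mul_self] at hbound
  refine le_of_sq_le_sq ?_ (by positivity)
  calc ‖τ a‖ ^ 2 ≤ ‖τ 1‖ * ‖τ (star a * a)‖ := hcs
    _ ≤ ‖τ 1‖ * (‖τ 1‖ * (‖a‖ * ‖a‖)) := by gcongr
    _ = (‖τ 1‖ * ‖a‖) ^ 2 := by ring

lemma apply_mul_eq_of_apply_eq_character {B : Type*} [Ring B] [Algebra ℂ B] [Star B]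
    (τ : A →ₚ[ℂ] ℂ) (ι : B →⋆ₐ[ℂ] A) (χ : B →⋆ₐ[ℂ] ℂ) (hτι : ∀ b, τ (ι b) = χ b)
    (b : B) (c : A) : τ (ι b * c) = χ b * τ c := by
  set d := b - algebraMap ℂ B (χ b)
  have hχd : χ d = 0 := by simp [d, AlgHomClass.commutes]
  have hd : τ (ι d * star (ι d)) = 0 := by
    rw [← map_star, ← map_mul, hτι, map_mul, map_star, hχd, zero_mul]
  have := τ.apply_mul_eq_zero_of_apply_mul_star_eq_zero hd c
  rw [map_sub, AlgHomClass.commutes, Algebra.algebraMap_eq_smul_one, sub_mul, smul_one_mul,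
    map_sub, map_smul, smul_eq_mul, sub_eq_zero] at this
  exact this

end Unital

end PositiveLinearMap

lemma apply_sum_mul_conj_eq {G A B : Type*} [Group G] [Ring A] [Algebra ℂ A] [Semiring B]
    (τ : A →ₗ[ℂ] ℂ) (ι : B → A) (χ : B →+* ℂ) (hτι : ∀ b c, τ (ι b * c) = χ b * τ c)
    (u : G → A) (humul : ∀ s t : G, u (s * t) = u s * u t)
    (hτinv : ∀ s g : G, τ (u (s * g * s⁻¹)) = τ (u g))
    {m : ℕ} (s : Fin m → G) (f : Fin m → B) (hf : ∑ j, f j = 1) (t : G) :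
    τ (∑ j, ι (f j) * (u (s j) * u t * u (s j)⁻¹)) = τ (u t) := by
  have hconj (j : Fin m) : u (s j) * u t * u (s j)⁻¹ = u (s j * t * (s j)⁻¹) := by
    rw [humul, humul]
  rw [map_sum]
  simp only [hconj, hτι, hτinv]
  rw [← Finset.sum_mul, ← map_sum, hf, map_one, one_mul]

theorem state_vanishes_on_averaged_unitary_general {G X A : Type*} [Group G]
    [TopologicalSpace X]
    [NormedRing A] [StarRing A] [CStarRing A] [NormedAlgebra ℂ A]
    [CompleteSpace A] [StarModule ℂ A]
    (ι : C(X, ℂ) →⋆ₐ[ℂ] A)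
    (u : G → A) (humul : ∀ s t : G, u (s * t) = u s * u t)
    (τ : A →ₗ[ℂ] ℂ) (hτ1 : τ 1 = 1) (hτpos : ∀ a : A, 0 ≤ τ (star a * a))
    (x : X) (hτx : ∀ f : C(X, ℂ), τ (ι f) = f x)
    (hτinv : ∀ s g : G, τ (u (s * g * s⁻¹)) = τ (u g))
    (f : C(X, ℂ)) (t : G)
    (havg : ∀ ε : ℝ, 0 < ε → ∃ (m : ℕ) (s : Fin m → G) (fj : Fin m → C(X, ℂ)),
      (∀ j, 0 ≤ fj j) ∧ (∑ j, fj j = 1) ∧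
      ‖∑ j, ι (fj j) * (u (s j) * u t * u (s j)⁻¹)‖ < ε) :
    τ (ι f * u t) = 0 := by
  -- `A` is ordered by its spectral order, in which `0 ≤ a ↔ ∃ b, a = star b * b`.
  let _ : CStarAlgebra A := {}
  let _ := CStarAlgebra.spectralOrder A
  have _ := CStarAlgebra.spectralOrderedRing A
  let φ := PositiveLinearMap.ofNonnegStarMulSelf τ hτpos
  have hmul (g : C(X, ℂ)) (c : A) : τ (ι g * c) = g x * τ c :=
    φ.apply_mul_eq_of_apply_eq_character ι (ContinuousMap.evalStarAlgHom ℂ ℂ x) hτx g c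
  suffices τ (u t) = 0 by rw [hmul, this, mul_zero]
  refine norm_le_zero_iff.mp (le_of_forall_pos_lt_add fun ε hε => ?_)
  obtain ⟨m, s, fj, -, hsum, hnorm⟩ := havg ε hε
  calc ‖τ (u t)‖ = ‖τ (∑ j, ι (fj j) * (u (s j) * u t * u (s j)⁻¹))‖ := by
        rw [apply_sum_mul_conj_eq τ ι (ContinuousMap.evalStarAlgHom ℂ ℂ x).toRingHom hmul u
          humul hτinv s fj hsum t]
    _ ≤ ‖τ 1‖ * ‖∑ j, ι (fj j) * (u (s j) * u t * u (s j)⁻¹)‖ := φ.norm_apply_le _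
    _ < 0 + ε := by rwa [hτ1, norm_one, one_mul, zero_add]

/-- In `A = C(X) ⋊_r G` (with embedding `ι : C(X) → A` and canonical
unitaries `u s = λ_s`), let `τ` be a state with `τ|_{C(X)} = δ_x` and with
`τ|_{C*_r(G)}` invariant under conjugation. If `f ∈ C(X)`, `t ∈ G`, and for every
`ε > 0` there are `s₁, …, s_m ∈ G` and `0 ≤ f₁, …, f_m ∈ C(X)` with `∑ f_j = 1` and
`‖∑_j f_j λ_{s_j} λ_t λ_{s_j}⁻¹‖ < ε`, then `τ(f λ_t) = 0`. -/
theorem state_vanishes_on_averaged_unitary {G X A : Type*} [Group G] [Countable G]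
    [TopologicalSpace X] [CompactSpace X] [T2Space X]
    [NormedRing A] [StarRing A] [CStarRing A] [NormedAlgebra ℂ A]
    [CompleteSpace A] [StarModule ℂ A]
    (ι : C(X, ℂ) →⋆ₐ[ℂ] A) (hι : Isometry ι)
    (u : G → A) (hu1 : u 1 = 1) (humul : ∀ s t : G, u (s * t) = u s * u t)
    (hustar : ∀ s : G, star (u s) = u s⁻¹)
    (τ : A →ₗ[ℂ] ℂ) (hτ1 : τ 1 = 1) (hτpos : ∀ a : A, 0 ≤ τ (star a * a))
    (x : X) (hτx : ∀ f : C(X, ℂ), τ (ι f) = f x)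
    (hτinv : ∀ s g : G, τ (u (s * g * s⁻¹)) = τ (u g))
    (f : C(X, ℂ)) (t : G)
    (havg : ∀ ε : ℝ, 0 < ε → ∃ (m : ℕ) (s : Fin m → G) (fj : Fin m → C(X, ℂ)),
      (∀ j, 0 ≤ fj j) ∧ (∑ j, fj j = 1) ∧
      ‖∑ j, ι (fj j) * (u (s j) * u t * u (s j)⁻¹)‖ < ε) :
    τ (ι f * u t) = 0 :=
  state_vanishes_on_averaged_unitary_general ι u humul τ hτ1 hτpos x hτx hτinv f t havg
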